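/- arXiv:1012.1842 — 2 statements merged into one kernel-verified Lean document; each statement's English description precedes it below -/
import Mathlib

section
/- Let H be a separable real Hilbert space with orthonormal basis {e_i}_{i≥1}, let d be a positive integer, and let X := (X_k, k ∈ Z^d) be a strictly stationary ρ'-mixing random field of H-valued random variables with E X_0 = 0_H and E‖X_0‖^2_H < ∞. Let j be a positive integer with ρ'(X,j) < 1 and set C := j^d (1+ρ'(X,j))^d/(1−ρ'(X,j))^d. Then the coordinate variance limits σ_{ii} := lim_{min{L_u} → ∞} E⟨S(X,L),e_i⟩^2/(L_1·...·L_d) satisfy σ_{ii} ≤ C · E⟨X_0,e_i⟩^2 for every i ≥ 1, and consequently Σ_{i=1}^∞ σ_{ii} ≤ C · E‖X_0‖^2_H < ∞ (the covariance operator has finite trace). -/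
/-!
Fix a vector `v` and view the centered stationary real field `⟪X_k, v⟫` as vectors `y_k` of
`L²(P)`. Sums of `y_k` over two index sets that are `j` apart in some coordinate have correlation
at most `ρ = ρ'(X, j)`. If vectors `z_k`, `k ∈ T`, satisfy this for every split `A`, `T \ A`, then
averaging `(1 - ρ) ‖u + w‖² ≤ (1 + ρ) ‖u - w‖²` over all `2^|T|` sign patterns gives
`(1 - ρ) ‖∑ z_k‖² ≤ (1 + ρ) ∑ ‖z_k‖²`. Along one coordinate, each residue class mod `j` is
`j`-separated, so Cauchy–Schwarz over the `j` classes costs a factor `j`; slicing the box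
one coordinate at a time yields `E⟨S(X,L), v⟩² ≤ C L₁⋯L_d E⟨X₀, v⟩²`. Dividing by `L₁⋯L_d` and
letting `L → ∞` bounds `σ_ii`, and Bessel's inequality sums these bounds to `C E‖X₀‖²`.
-/

open MeasureTheory ProbabilityTheory Filter

noncomputable section

/-- Rectangular partial sum `S(X, L) = ∑_{1 ≤ k_u ≤ L_u} X_k`. -/
def boxSum {Ω : Type*} {d : ℕ} {E : Type*} [AddCommMonoid E]
    (X : (Fin d → ℤ) → Ω → E) (L : Fin d → ℕ) (ω : Ω) : E :=
  ∑ k ∈ Finset.Icc (fun _ => 1) L, X (fun u => (k u : ℤ)) ω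

/-- Strict stationarity of a random field. -/
def StrictlyStationary {Ω : Type*} [MeasurableSpace Ω] (P : Measure Ω) {d : ℕ}
    {E : Type*} [MeasurableSpace E] (X : (Fin d → ℤ) → Ω → E) : Prop :=
  ∀ j : Fin d → ℤ,
    Measure.map (fun ω (k : Fin d → ℤ) => X (k + j) ω) P =
      Measure.map (fun ω (k : Fin d → ℤ) => X k ω) P

/-- Maximal correlation coefficient `ρ(𝒜, ℬ)` between two sub-σ-fields. -/
def maxCorr {Ω : Type*} [MeasurableSpace Ω] (P : Measure Ω)
    (A B : MeasurableSpace Ω) : ℝ :=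
  sSup { r : ℝ | ∃ f g : Ω → ℝ, Measurable[A] f ∧ Measurable[B] g ∧
    MemLp f 2 P ∧ MemLp g 2 P ∧ variance f P ≠ 0 ∧ variance g P ≠ 0 ∧
    r = |(∫ ω, f ω * g ω ∂P) - (∫ ω, f ω ∂P) * (∫ ω, g ω ∂P)| /
        (Real.sqrt (variance f P) * Real.sqrt (variance g P)) }

/-- The σ-field generated by the random variables `X_k`, `k ∈ Q`. -/
def fieldSigma {Ω : Type*} {d : ℕ} {E : Type*} [MeasurableSpace E]
    (X : (Fin d → ℤ) → Ω → E) (Q : Set (Fin d → ℤ)) : MeasurableSpace Ω :=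
  ⨆ k ∈ Q, MeasurableSpace.comap (X k) inferInstance

/-- `Q` and `S` are separated: lie in coordinate slabs at distance `≥ n`. -/
def SeparatedPair {d : ℕ} (n : ℕ) (Q S : Finset (Fin d → ℤ)) : Prop :=
  ∃ u : Fin d, ∃ A B : Set ℤ, A.Nonempty ∧ B.Nonempty ∧ Disjoint A B ∧
    (∀ a ∈ A, ∀ b ∈ B, (n : ℤ) ≤ |a - b|) ∧
    (∀ k ∈ Q, k u ∈ A) ∧ (∀ k ∈ S, k u ∈ B)

/-- The interlaced mixing coefficient `ρ'(X, n)`. -/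
def rhoPrime {Ω : Type*} [MeasurableSpace Ω] (P : Measure Ω) {d : ℕ}
    {E : Type*} [MeasurableSpace E] (X : (Fin d → ℤ) → Ω → E) (n : ℕ) : ℝ :=
  sSup { r : ℝ | ∃ Q S : Finset (Fin d → ℤ), Q.Nonempty ∧ S.Nonempty ∧
    Disjoint Q S ∧ SeparatedPair n Q S ∧
    r = maxCorr P (fieldSigma X (Q : Set (Fin d → ℤ)))
          (fieldSigma X (S : Set (Fin d → ℤ))) }

/-- `ρ'`-mixing: `ρ'(X, n) → 0` as `n → ∞`. -/
def RhoPrimeMixing {Ω : Type*} [MeasurableSpace Ω] (P : Measure Ω) {d : ℕ}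
    {E : Type*} [MeasurableSpace E] (X : (Fin d → ℤ) → Ω → E) : Prop :=
  Tendsto (rhoPrime P X) atTop (nhds 0)

open Finset
open scoped RealInnerProductSpace

theorem Int.le_abs_sub_of_emod_eq {j a b : ℤ} (h : a % j = b % j) (hab : a ≠ b) :
    j ≤ |a - b| :=
  Int.le_of_dvd (abs_pos.2 (sub_ne_zero.2 hab)) ((dvd_abs _ _).2 (Int.ModEq.dvd h.symm))

theorem norm_sum_sq_le_card_mul {E ι : Type*} [SeminormedAddCommGroup E] (s : Finset ι)
    (x : ι → E) : ‖∑ i ∈ s, x i‖ ^ 2 ≤ #s * ∑ i ∈ s, ‖x i‖ ^ 2 :=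
  (pow_le_pow_left₀ (norm_nonneg _) (norm_sum_le s x) 2).trans sq_sum_le_card_mul_sum_sq

section InnerProductSpace

variable {E : Type*} [NormedAddCommGroup E] [InnerProductSpace ℝ E]

theorem one_sub_mul_norm_add_sq_le {u v : E} {ρ : ℝ} (hρ : 0 ≤ ρ)
    (h : |⟪u, v⟫| ≤ ρ * (‖u‖ * ‖v‖)) :
    (1 - ρ) * ‖u + v‖ ^ 2 ≤ (1 + ρ) * ‖u - v‖ ^ 2 := by
  rw [norm_add_sq_real, norm_sub_sq_real]
  nlinarith [le_abs_self ⟪u, v⟫, mul_nonneg hρ (sq_nonneg (‖u‖ - ‖v‖))]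

theorem sum_powerset_norm_sub_sq {ι : Type*} [DecidableEq ι] (z : ι → E) (T : Finset ι) :
    ∑ A ∈ T.powerset, ‖∑ k ∈ A, z k - ∑ k ∈ T \ A, z k‖ ^ 2 = 2 ^ #T * ∑ k ∈ T, ‖z k‖ ^ 2 := by
  induction T using Finset.induction_on with
  | empty => simp
  | insert a T ha ih =>
    have hpar (u : E) : ‖u - z a‖ ^ 2 + ‖z a + u‖ ^ 2 = 2 * ‖u‖ ^ 2 + 2 * ‖z a‖ ^ 2 := by
      have := parallelogram_law_with_norm ℝ u (z a)
      rw [add_comm (z a)]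
      nlinarith [this]
    have hsplit : ∀ A ∈ T.powerset,
        ‖∑ k ∈ A, z k - ∑ k ∈ insert a T \ A, z k‖ ^ 2 +
          ‖∑ k ∈ insert a A, z k - ∑ k ∈ insert a T \ insert a A, z k‖ ^ 2 =
        2 * ‖∑ k ∈ A, z k - ∑ k ∈ T \ A, z k‖ ^ 2 + 2 * ‖z a‖ ^ 2 := by
      intro A hA
      have haA : a ∉ A := fun h => ha (mem_powerset.1 hA h)
      rw [insert_sdiff_of_notMem _ haA, insert_sdiff_insert, sdiff_insert_of_notMem ha,
        sum_insert (fun h => ha (mem_sdiff.1 h).1), sum_insert haA, sub_add_eq_sub_sub_swap,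
        add_sub_assoc, hpar]
    rw [sum_powerset_insert ha, ← sum_add_distrib, sum_congr rfl hsplit, sum_add_distrib,
      ← mul_sum, ih, sum_const, card_powerset, nsmul_eq_mul, card_insert_of_notMem ha,
      sum_insert ha]
    push_cast
    ring

theorem one_sub_mul_norm_sq_sum_le {ι : Type*} [DecidableEq ι] {ρ : ℝ} (hρ : 0 ≤ ρ)
    (T : Finset ι) (z : ι → E)
    (h : ∀ A ⊆ T, |⟪∑ k ∈ A, z k, ∑ k ∈ T \ A, z k⟫| ≤
      ρ * (‖∑ k ∈ A, z k‖ * ‖∑ k ∈ T \ A, z k‖)) :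
    (1 - ρ) * ‖∑ k ∈ T, z k‖ ^ 2 ≤ (1 + ρ) * ∑ k ∈ T, ‖z k‖ ^ 2 := by
  have hA : ∀ A ∈ T.powerset, (1 - ρ) * ‖∑ k ∈ T, z k‖ ^ 2 ≤
      (1 + ρ) * ‖∑ k ∈ A, z k - ∑ k ∈ T \ A, z k‖ ^ 2 := by
    intro A hA
    rw [← sum_sdiff (mem_powerset.1 hA), add_comm]
    exact one_sub_mul_norm_add_sq_le hρ (h A (mem_powerset.1 hA))
  have hsum := sum_le_sum hA
  rw [sum_const, card_powerset, nsmul_eq_mul, ← mul_sum, sum_powerset_norm_sub_sq] at hsum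
  push_cast at hsum
  nlinarith [pow_pos (two_pos : (0:ℝ) < 2) #T]

theorem norm_sq_sum_le_of_abs_inner_le_of_separated {j : ℕ} (hj : 0 < j) {ρ : ℝ} (hρ0 : 0 ≤ ρ)
    (hρ1 : ρ < 1) (w : ℤ → E)
    (hw : ∀ A B : Finset ℤ, (∀ a ∈ A, ∀ b ∈ B, (j : ℤ) ≤ |a - b|) →
      |⟪∑ c ∈ A, w c, ∑ c ∈ B, w c⟫| ≤ ρ * (‖∑ c ∈ A, w c‖ * ‖∑ c ∈ B, w c‖))
    (T : Finset ℤ) :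
    ‖∑ c ∈ T, w c‖ ^ 2 ≤ j * ((1 + ρ) / (1 - ρ)) * ∑ c ∈ T, ‖w c‖ ^ 2 := by
  set K := (1 + ρ) / (1 - ρ)
  have hres : ∀ c ∈ T, c % j ∈ Ico (0 : ℤ) j := fun c _ =>
    mem_Ico.2 ⟨Int.emod_nonneg c (by omega), Int.emod_lt_of_pos c (by omega)⟩
  have hclass (r : ℤ) :
      ‖∑ c ∈ T with c % j = r, w c‖ ^ 2 ≤ K * ∑ c ∈ T with c % j = r, ‖w c‖ ^ 2 := by
    rw [div_mul_eq_mul_div, le_div_iff₀ (by linarith), mul_comm]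
    refine one_sub_mul_norm_sq_sum_le hρ0 _ w fun A hA => hw A _ fun a ha b hb => ?_
    have hb' := mem_sdiff.1 hb
    refine Int.le_abs_sub_of_emod_eq ?_ (by rintro rfl; exact hb'.2 ha)
    rw [(mem_filter.1 (hA ha)).2, (mem_filter.1 hb'.1).2]
  calc ‖∑ c ∈ T, w c‖ ^ 2 = ‖∑ r ∈ Ico (0 : ℤ) j, ∑ c ∈ T with c % j = r, w c‖ ^ 2 := by
        rw [sum_fiberwise_of_maps_to hres]
    _ ≤ j * ∑ r ∈ Ico (0 : ℤ) j, ‖∑ c ∈ T with c % j = r, w c‖ ^ 2 := by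
        simpa using norm_sum_sq_le_card_mul (Ico (0 : ℤ) j) fun r => ∑ c ∈ T with c % j = r, w c
    _ ≤ j * ∑ r ∈ Ico (0 : ℤ) j, K * ∑ c ∈ T with c % j = r, ‖w c‖ ^ 2 := by
        gcongr with r; exact hclass r
    _ = j * K * ∑ c ∈ T, ‖w c‖ ^ 2 := by
        rw [← mul_sum, sum_fiberwise_of_maps_to hres, mul_assoc]

end InnerProductSpace

section Boxes

variable {d : ℕ}

def coordBox (L : Fin d → ℕ) (V : Finset (Fin d)) : Finset (Fin d → ℤ) :=
  Fintype.piFinset fun u => if u ∈ V then Icc 1 (L u : ℤ) else {0}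

def stackAlong (a : Fin d) (A : Finset ℤ) (F : Finset (Fin d → ℤ)) : Finset (Fin d → ℤ) :=
  (A ×ˢ F).image fun p => p.2 + Pi.single a p.1

theorem coordBox_empty (L : Fin d → ℕ) : coordBox L ∅ = {0} := by
  ext k
  simp [coordBox, funext_iff]

theorem apply_eq_zero_of_mem_coordBox {L : Fin d → ℕ} {V : Finset (Fin d)} {u : Fin d}
    (hu : u ∉ V) {k : Fin d → ℤ} (hk : k ∈ coordBox L V) : k u = 0 := by
  simpa [hu] using Fintype.mem_piFinset.1 hk u

theorem apply_mem_of_mem_stackAlong {a : Fin d} {A : Finset ℤ} {F : Finset (Fin d → ℤ)}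
    (hF : ∀ x ∈ F, x a = 0) {k : Fin d → ℤ} (hk : k ∈ stackAlong a A F) : k a ∈ A := by
  obtain ⟨⟨c, x⟩, hcx, rfl⟩ := mem_image.1 hk
  obtain ⟨hc, hx⟩ := mem_product.1 hcx
  simpa [hF x hx] using hc

theorem sum_stackAlong {M : Type*} [AddCommMonoid M] {a : Fin d} {F : Finset (Fin d → ℤ)}
    (hF : ∀ x ∈ F, x a = 0) (A : Finset ℤ) (y : (Fin d → ℤ) → M) :
    ∑ k ∈ stackAlong a A F, y k = ∑ c ∈ A, ∑ x ∈ F, y (x + Pi.single a c) := by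
  rw [stackAlong, sum_image, sum_product]
  rintro ⟨c, x⟩ hcx ⟨c', x'⟩ hcx' h
  have hc : c = c' := by
    simpa [hF x (mem_product.1 hcx).2, hF x' (mem_product.1 hcx').2] using congr_fun h a
  subst hc
  simpa using h

theorem coordBox_insert (L : Fin d → ℕ) {a : Fin d} {V : Finset (Fin d)} (ha : a ∉ V) :
    coordBox L (insert a V) = stackAlong a (Icc 1 (L a : ℤ)) (coordBox L V) := by
  ext k
  simp only [coordBox, stackAlong, Fintype.mem_piFinset, mem_image, mem_product, Prod.exists]
  constructor
  · intro hk
    refine ⟨k a, Function.update k a 0, ⟨by simpa using hk a, fun u => ?_⟩, ?_⟩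
    · by_cases hua : u = a
      · subst hua; simp [ha]
      · simpa [hua] using hk u
    · ext u
      by_cases hua : u = a
      · subst hua; simp
      · simp [hua]
  · rintro ⟨c, x, ⟨hc, hx⟩, rfl⟩ u
    by_cases hua : u = a
    · subst hua
      have hx0 : x u = 0 := by simpa [ha] using hx u
      simpa [hx0] using hc
    · simpa [hua] using hx u

theorem boxSum_eq_sum_coordBox {Ω M : Type*} [AddCommMonoid M] (X : (Fin d → ℤ) → Ω → M)
    (L : Fin d → ℕ) (ω : Ω) : boxSum X L ω = ∑ k ∈ coordBox L univ, X k ω := by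
  refine sum_nbij' (fun k u => k u) (fun k u => (k u).toNat) ?_ ?_ ?_ ?_ fun _ _ => rfl
  all_goals
    intro k hk
    simp only [coordBox, mem_univ, if_true, Fintype.mem_piFinset, mem_Icc, Pi.le_def] at hk ⊢
  · exact fun u => ⟨by exact_mod_cast (hk.1 u), by exact_mod_cast (hk.2 u)⟩
  · exact ⟨fun u => by have := hk u; omega, fun u => by have := hk u; omega⟩
  · ext u; exact Int.toNat_natCast (k u)
  · ext u; exact Int.toNat_of_nonneg (by have := hk u; omega)

theorem norm_sq_sum_coordBox_le {E : Type*} [NormedAddCommGroup E] [InnerProductSpace ℝ E]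
    {j : ℕ} (hj : 0 < j) {ρ : ℝ} (hρ0 : 0 ≤ ρ) (hρ1 : ρ < 1) (y : (Fin d → ℤ) → E)
    (hstat : ∀ (F : Finset (Fin d → ℤ)) (t : Fin d → ℤ), ‖∑ k ∈ F, y (k + t)‖ = ‖∑ k ∈ F, y k‖)
    (hmix : ∀ (u : Fin d) (Q S : Finset (Fin d → ℤ)), (∀ k ∈ Q, ∀ l ∈ S, (j : ℤ) ≤ |k u - l u|) →
      |⟪∑ k ∈ Q, y k, ∑ k ∈ S, y k⟫| ≤ ρ * (‖∑ k ∈ Q, y k‖ * ‖∑ k ∈ S, y k‖))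
    (L : Fin d → ℕ) (V : Finset (Fin d)) :
    ‖∑ k ∈ coordBox L V, y k‖ ^ 2 ≤
      (j * ((1 + ρ) / (1 - ρ))) ^ #V * (∏ u ∈ V, (L u : ℝ)) * ‖y 0‖ ^ 2 := by
  induction V using Finset.induction_on with
  | empty => simp [coordBox_empty]
  | insert a V ha ih =>
    have hF : ∀ x ∈ coordBox L V, x a = 0 := fun x => apply_eq_zero_of_mem_coordBox ha
    set w : ℤ → E := fun c => ∑ x ∈ coordBox L V, y (x + Pi.single a c)
    have hw : ∀ A B : Finset ℤ, (∀ a ∈ A, ∀ b ∈ B, (j : ℤ) ≤ |a - b|) →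
        |⟪∑ c ∈ A, w c, ∑ c ∈ B, w c⟫| ≤ ρ * (‖∑ c ∈ A, w c‖ * ‖∑ c ∈ B, w c‖) := by
      intro A B hAB
      simp only [w, ← sum_stackAlong hF]
      exact hmix a _ _ fun k hk l hl =>
        hAB _ (apply_mem_of_mem_stackAlong hF hk) _ (apply_mem_of_mem_stackAlong hF hl)
    have hslab : ∀ c, ‖w c‖ ^ 2 = ‖∑ k ∈ coordBox L V, y k‖ ^ 2 := fun c => by rw [hstat]
    calc ‖∑ k ∈ coordBox L (insert a V), y k‖ ^ 2 = ‖∑ c ∈ Icc 1 (L a : ℤ), w c‖ ^ 2 := by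
          rw [coordBox_insert L ha, sum_stackAlong hF]
      _ ≤ j * ((1 + ρ) / (1 - ρ)) * ∑ c ∈ Icc 1 (L a : ℤ), ‖w c‖ ^ 2 :=
          norm_sq_sum_le_of_abs_inner_le_of_separated hj hρ0 hρ1 w hw _
      _ = j * ((1 + ρ) / (1 - ρ)) * (L a * ‖∑ k ∈ coordBox L V, y k‖ ^ 2) := by
          simp [hslab]
      _ ≤ j * ((1 + ρ) / (1 - ρ)) * (L a *
            ((j * ((1 + ρ) / (1 - ρ))) ^ #V * (∏ u ∈ V, (L u : ℝ)) * ‖y 0‖ ^ 2)) := by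
          have : 0 ≤ (1 + ρ) / (1 - ρ) := div_nonneg (by linarith) (by linarith)
          gcongr
      _ = (j * ((1 + ρ) / (1 - ρ))) ^ #(insert a V) * (∏ u ∈ insert a V, (L u : ℝ)) *
            ‖y 0‖ ^ 2 := by
          rw [card_insert_of_notMem ha, prod_insert ha]
          ring

end Boxes

section Correlation

variable {Ω : Type*} {mΩ : MeasurableSpace Ω} {P : Measure Ω}

theorem MeasureTheory.MemLp.inner_toLp_eq_integral {f g : Ω → ℝ} (hf : MemLp f 2 P)
    (hg : MemLp g 2 P) : ⟪hf.toLp f, hg.toLp g⟫ = ∫ ω, f ω * g ω ∂P := by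
  rw [L2.inner_def]
  refine integral_congr_ae ?_
  filter_upwards [hf.coeFn_toLp, hg.coeFn_toLp] with ω hfω hgω
  simp [hfω, hgω, mul_comm]

theorem inner_sum_toLp_eq_integral {ι : Type*} {Y : ι → Ω → ℝ} (hY : ∀ i, MemLp (Y i) 2 P)
    (s t : Finset ι) :
    ⟪∑ i ∈ s, (hY i).toLp (Y i), ∑ i ∈ t, (hY i).toLp (Y i)⟫ =
      ∫ ω, (∑ i ∈ s, Y i ω) * (∑ i ∈ t, Y i ω) ∂P := by
  simp_rw [sum_inner, inner_sum, MemLp.inner_toLp_eq_integral, sum_mul_sum]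
  rw [integral_finsetSum]
  · exact sum_congr rfl fun i _ => (integral_finsetSum _ fun k _ =>
      (hY i).integrable_mul (hY k)).symm
  · exact fun i _ => integrable_finsetSum _ fun k _ => (hY i).integrable_mul (hY k)

theorem abs_covariance_le_sqrt_variance_mul [IsFiniteMeasure P] {f g : Ω → ℝ}
    (hf : MemLp f 2 P) (hg : MemLp g 2 P) : |cov[f, g; P]| ≤ √(Var[f; P]) * √(Var[g; P]) := by
  have hf₀ := hf.sub (memLp_const P[f])
  have hg₀ := hg.sub (memLp_const P[g])
  have hcov : cov[f, g; P] = ⟪hf₀.toLp _, hg₀.toLp _⟫ := (hf₀.inner_toLp_eq_integral hg₀).symm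
  have hvar : ∀ {h : Ω → ℝ} (hh : MemLp h 2 P),
      Var[h; P] = ‖(hh.sub (memLp_const P[h])).toLp _‖ ^ 2 := fun hh => by
    rw [← covariance_self hh.aemeasurable, ← real_inner_self_eq_norm_sq]
    exact (MemLp.inner_toLp_eq_integral _ _).symm
  rw [hcov, hvar hf, hvar hg, Real.sqrt_sq (norm_nonneg _), Real.sqrt_sq (norm_nonneg _)]
  exact abs_real_inner_le_norm _ _

theorem abs_sub_integral_mul_div_le_one [IsProbabilityMeasure P] {f g : Ω → ℝ}
    (hf : MemLp f 2 P) (hg : MemLp g 2 P) :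
    |(∫ ω, f ω * g ω ∂P) - (∫ ω, f ω ∂P) * (∫ ω, g ω ∂P)| / (√(Var[f; P]) * √(Var[g; P])) ≤ 1 :=
  div_le_one_of_le₀ ((covariance_eq_sub hf hg).symm ▸ abs_covariance_le_sqrt_variance_mul hf hg)
    (by positivity)

theorem maxCorr_nonneg (A B : MeasurableSpace Ω) : 0 ≤ @maxCorr Ω mΩ P A B :=
  Real.sSup_nonneg fun _ ⟨_, _, _, _, _, _, _, _, hr⟩ => hr ▸ by positivity

theorem maxCorr_le_one [IsProbabilityMeasure P] (A B : MeasurableSpace Ω) :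
    @maxCorr Ω mΩ P A B ≤ 1 :=
  Real.sSup_le (fun _ ⟨_, _, _, _, hf, hg, _, _, hr⟩ => hr ▸ abs_sub_integral_mul_div_le_one hf hg)
    zero_le_one

theorem abs_covariance_le_maxCorr_mul [IsProbabilityMeasure P] {A B : MeasurableSpace Ω}
    {f g : Ω → ℝ} (hfA : Measurable[A] f) (hgB : Measurable[B] g) (hf : MemLp f 2 P)
    (hg : MemLp g 2 P) :
    |cov[f, g; P]| ≤ @maxCorr Ω mΩ P A B * (√(Var[f; P]) * √(Var[g; P])) := by
  rcases (mul_nonneg (Real.sqrt_nonneg (Var[f; P])) (Real.sqrt_nonneg (Var[g; P]))).eq_or_lt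
    with hzero | hpos
  · rw [← hzero, mul_zero]
    exact (abs_covariance_le_sqrt_variance_mul hf hg).trans hzero.ge
  · rw [← div_le_iff₀ hpos, covariance_eq_sub hf hg]
    refine le_csSup ⟨1, fun _ ⟨_, _, _, _, hf, hg, _, _, hr⟩ =>
      hr ▸ abs_sub_integral_mul_div_le_one hf hg⟩ ⟨f, g, hfA, hgB, hf, hg, ?_, ?_, rfl⟩
    all_goals exact fun h => hpos.ne' (by simp [h])

end Correlation

section RandomField

variable {Ω : Type*} {mΩ : MeasurableSpace Ω} {P : Measure Ω} {d : ℕ} {E : Type*}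
  [MeasurableSpace E] {X : (Fin d → ℤ) → Ω → E}

theorem SeparatedPair.disjoint {n : ℕ} {Q S : Finset (Fin d → ℤ)} (h : SeparatedPair n Q S) :
    Disjoint Q S := by
  obtain ⟨u, A, B, -, -, hAB, -, hQ, hS⟩ := h
  exact disjoint_left.2 fun k hkQ hkS => Set.disjoint_left.1 hAB (hQ k hkQ) (hS k hkS)

theorem separatedPair_of_le_abs_sub {n : ℕ} (hn : 0 < n) {u : Fin d}
    {Q S : Finset (Fin d → ℤ)} (hQ : Q.Nonempty) (hS : S.Nonempty)
    (h : ∀ k ∈ Q, ∀ l ∈ S, (n : ℤ) ≤ |k u - l u|) : SeparatedPair n Q S := by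
  refine ⟨u, (· u) '' Q, (· u) '' S, (coe_nonempty.2 hQ).image _, (coe_nonempty.2 hS).image _,
    Set.disjoint_left.2 ?_, ?_, fun k hk => ⟨k, hk, rfl⟩, fun k hk => ⟨k, hk, rfl⟩⟩
  · rintro _ ⟨k, hk, rfl⟩ ⟨l, hl, hlk⟩
    have := h k hk l hl
    rw [show l u = k u from hlk, sub_self, abs_zero] at this
    omega
  · rintro _ ⟨k, hk, rfl⟩ _ ⟨l, hl, rfl⟩
    exact h k hk l hl

theorem rhoPrime_nonneg (X : (Fin d → ℤ) → Ω → E) (n : ℕ) : 0 ≤ rhoPrime P X n :=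
  Real.sSup_nonneg fun _ ⟨_, _, _, _, _, _, hr⟩ => hr ▸ maxCorr_nonneg _ _

theorem maxCorr_le_rhoPrime [IsProbabilityMeasure P] {n : ℕ} {Q S : Finset (Fin d → ℤ)}
    (hQ : Q.Nonempty) (hS : S.Nonempty) (hsep : SeparatedPair n Q S) :
    maxCorr P (fieldSigma X Q) (fieldSigma X S) ≤ rhoPrime P X n :=
  le_csSup ⟨1, fun _ ⟨_, _, _, _, _, _, hr⟩ => hr ▸ maxCorr_le_one _ _⟩
    ⟨Q, S, hQ, hS, hsep.disjoint, hsep, rfl⟩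

theorem measurable_fieldSigma {Q : Set (Fin d → ℤ)} {k : Fin d → ℤ} (hk : k ∈ Q) :
    Measurable[fieldSigma X Q] (X k) :=
  Measurable.of_comap_le
    (le_iSup₂ (f := fun k (_ : k ∈ Q) => MeasurableSpace.comap (X k) inferInstance) k hk)

theorem abs_integral_sum_mul_sum_le_rhoPrime_mul [IsProbabilityMeasure P] {g : E → ℝ}
    (hg : Measurable g) (hg₂ : ∀ k, MemLp (fun ω => g (X k ω)) 2 P)
    (hg₀ : ∀ k, ∫ ω, g (X k ω) ∂P = 0) {n : ℕ} (hn : 0 < n) {u : Fin d}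
    {Q S : Finset (Fin d → ℤ)} (hsep : ∀ k ∈ Q, ∀ l ∈ S, (n : ℤ) ≤ |k u - l u|) :
    |∫ ω, (∑ k ∈ Q, g (X k ω)) * (∑ k ∈ S, g (X k ω)) ∂P| ≤ rhoPrime P X n *
      (√(∫ ω, (∑ k ∈ Q, g (X k ω)) ^ 2 ∂P) * √(∫ ω, (∑ k ∈ S, g (X k ω)) ^ 2 ∂P)) := by
  rcases Q.eq_empty_or_nonempty with rfl | hQ
  · simp
  rcases S.eq_empty_or_nonempty with rfl | hS
  · simp
  have hmeas (R : Finset (Fin d → ℤ)) : Measurable[fieldSigma X R] fun ω => ∑ k ∈ R, g (X k ω) :=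
    Finset.measurable_sum R fun k hk => hg.comp (measurable_fieldSigma (mem_coe.2 hk))
  have hL2 (R : Finset (Fin d → ℤ)) : MemLp (fun ω => ∑ k ∈ R, g (X k ω)) 2 P :=
    memLp_finsetSum R fun k _ => hg₂ k
  have hmean (R : Finset (Fin d → ℤ)) : ∫ ω, ∑ k ∈ R, g (X k ω) ∂P = 0 := by
    rw [integral_finsetSum R fun k _ => (hg₂ k).integrable one_le_two]
    exact sum_eq_zero fun k _ => hg₀ k
  have hvar (R : Finset (Fin d → ℤ)) :
      Var[fun ω => ∑ k ∈ R, g (X k ω); P] = ∫ ω, (∑ k ∈ R, g (X k ω)) ^ 2 ∂P :=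
    variance_of_integral_eq_zero (hL2 R).aemeasurable (hmean R)
  have hcov := abs_covariance_le_maxCorr_mul (hmeas Q) (hmeas S) (hL2 Q) (hL2 S)
  rw [covariance_eq_sub (hL2 Q) (hL2 S), hmean, hmean, hvar, hvar, mul_zero, sub_zero] at hcov
  exact hcov.trans (mul_le_mul_of_nonneg_right
    (maxCorr_le_rhoPrime hQ hS (separatedPair_of_le_abs_sub hn hQ hS hsep)) (by positivity))

theorem StrictlyStationary.identDistrib_shift (hX : ∀ k, Measurable (X k))
    (hstat : StrictlyStationary P X) (t : Fin d → ℤ) :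
    IdentDistrib (fun ω k => X (k + t) ω) (fun ω k => X k ω) P P :=
  ⟨(measurable_pi_lambda _ fun _ => hX _).aemeasurable,
    (measurable_pi_lambda _ hX).aemeasurable, hstat t⟩

theorem StrictlyStationary.identDistrib (hX : ∀ k, Measurable (X k))
    (hstat : StrictlyStationary P X) (k : Fin d → ℤ) : IdentDistrib (X k) (X 0) P P := by
  simpa [Function.comp_def] using (hstat.identDistrib_shift hX k).comp (measurable_pi_apply 0)

theorem StrictlyStationary.integral_sum_sq_shift (hX : ∀ k, Measurable (X k))
    (hstat : StrictlyStationary P X) {g : E → ℝ} (hg : Measurable g)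
    (F : Finset (Fin d → ℤ)) (t : Fin d → ℤ) :
    ∫ ω, (∑ k ∈ F, g (X (k + t) ω)) ^ 2 ∂P = ∫ ω, (∑ k ∈ F, g (X k ω)) ^ 2 ∂P :=
  ((hstat.identDistrib_shift hX t).comp (u := fun x : (Fin d → ℤ) → E => (∑ k ∈ F, g (x k)) ^ 2)
    ((Finset.measurable_sum F fun k _ => hg.comp (measurable_pi_apply k)).pow_const 2)).integral_eq

end RandomField

theorem integral_inner_boxSum_sq_le {Ω : Type*} [MeasurableSpace Ω] {P : Measure Ω}
    [IsProbabilityMeasure P] {H : Type*} [NormedAddCommGroup H] [InnerProductSpace ℝ H]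
    [CompleteSpace H] [MeasurableSpace H] [BorelSpace H] {d : ℕ} {X : (Fin d → ℤ) → Ω → H}
    (hX : ∀ k, Measurable (X k)) (hstat : StrictlyStationary P X) (hmoment : MemLp (X 0) 2 P)
    (hmean : ∫ ω, X 0 ω ∂P = 0) (v : H) {j : ℕ} (hj : 0 < j) (hρ : rhoPrime P X j < 1)
    (L : Fin d → ℕ) :
    ∫ ω, ⟪boxSum X L ω, v⟫ ^ 2 ∂P ≤
      (j * ((1 + rhoPrime P X j) / (1 - rhoPrime P X j))) ^ d * (∏ u, (L u : ℝ)) *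
        ∫ ω, ⟪X 0 ω, v⟫ ^ 2 ∂P := by
  have hg : Measurable fun x : H => ⟪x, v⟫ := (continuous_id.inner continuous_const).measurable
  have hXL2 (k : Fin d → ℤ) : MemLp (X k) 2 P := (hstat.identDistrib hX k).memLp_iff.2 hmoment
  have hL2 (k : Fin d → ℤ) : MemLp (fun ω => ⟪X k ω, v⟫) 2 P := (hXL2 k).inner_const v
  have hcentered (k : Fin d → ℤ) : ∫ ω, ⟪X k ω, v⟫ ∂P = 0 := by
    simp_rw [real_inner_comm v]
    rw [integral_inner ((hXL2 k).integrable one_le_two) v, (hstat.identDistrib hX k).integral_eq,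
      hmean, inner_zero_right]
  set y : (Fin d → ℤ) → Lp ℝ 2 P := fun k => (hL2 k).toLp _
  have hnorm (F : Finset (Fin d → ℤ)) (φ : (Fin d → ℤ) → Fin d → ℤ) :
      ‖∑ k ∈ F, y (φ k)‖ = √(∫ ω, (∑ k ∈ F, ⟪X (φ k) ω, v⟫) ^ 2 ∂P) := by
    rw [norm_eq_sqrt_real_inner, inner_sum_toLp_eq_integral fun k => hL2 (φ k)]
    simp only [sq]
  have hbox := norm_sq_sum_coordBox_le hj (rhoPrime_nonneg X j) hρ y
    (fun F t => by
      rw [hnorm F (· + t), hnorm F fun k => k, hstat.integral_sum_sq_shift hX hg F t])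
    (fun u Q S hQS => by
      rw [inner_sum_toLp_eq_integral, hnorm Q fun k => k, hnorm S fun k => k]
      exact abs_integral_sum_mul_sum_le_rhoPrime_mul hg hL2 hcentered hj hQS) L univ
  rw [hnorm _ fun k => k, Real.sq_sqrt (integral_nonneg fun _ => sq_nonneg _), card_univ,
    Fintype.card_fin, norm_eq_sqrt_real_inner, MemLp.inner_toLp_eq_integral,
    Real.sq_sqrt (integral_nonneg fun _ => mul_self_nonneg _)] at hbox
  simpa only [boxSum_eq_sum_coordBox, sum_inner, sq] using hbox

theorem Orthonormal.sum_integral_inner_sq_le {Ω : Type*} [MeasurableSpace Ω] {P : Measure Ω}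
    {H ι : Type*} [NormedAddCommGroup H] [InnerProductSpace ℝ H] {e : ι → H}
    (he : Orthonormal ℝ e) {f : Ω → H} (hf : MemLp f 2 P) (s : Finset ι) :
    ∑ i ∈ s, ∫ ω, ⟪f ω, e i⟫ ^ 2 ∂P ≤ ∫ ω, ‖f ω‖ ^ 2 ∂P := by
  rw [← integral_finsetSum _ fun i _ => (hf.inner_const (e i)).integrable_sq]
  refine integral_mono (integrable_finsetSum _ fun i _ => (hf.inner_const (e i)).integrable_sq)
    ((memLp_two_iff_integrable_sq_norm hf.1).1 hf) fun ω => ?_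
  simpa [real_inner_comm] using he.sum_inner_products_le (f ω) (s := s)

open scoped RealInnerProductSpace in
theorem covariance_operator_finite_trace_general
    {Ω : Type*} [MeasurableSpace Ω] (P : Measure Ω) [IsProbabilityMeasure P]
    {H : Type*} [NormedAddCommGroup H] [InnerProductSpace ℝ H] [CompleteSpace H]
    [MeasurableSpace H] [BorelSpace H]
    (e : ℕ → H) (he : Orthonormal ℝ e)
    (d : ℕ) (X : (Fin d → ℤ) → Ω → H)
    (hmeas : ∀ k, Measurable (X k))
    (hstat : StrictlyStationary P X)
    (hmoment : MemLp (X 0) 2 P)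
    (hmean : ∫ ω, X 0 ω ∂P = 0)
    (j : ℕ) (hj : 0 < j) (hρ : rhoPrime P X j < 1)
    (C : ℝ)
    (hC : C = (j : ℝ) ^ d * (1 + rhoPrime P X j) ^ d / (1 - rhoPrime P X j) ^ d)
    (σdiag : ℕ → ℝ)
    (hσ : ∀ i, Tendsto (fun L : Fin d → ℕ =>
        (∫ ω, ⟪boxSum X L ω, e i⟫ ^ 2 ∂P) / ∏ u, (L u : ℝ))
        atTop (nhds (σdiag i))) :
    (∀ i, σdiag i ≤ C * ∫ ω, ⟪X 0 ω, e i⟫ ^ 2 ∂P) ∧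
      Summable σdiag ∧
      ∑' i, σdiag i ≤ C * ∫ ω, ‖X 0 ω‖ ^ 2 ∂P := by
  have hC' : C = (j * ((1 + rhoPrime P X j) / (1 - rhoPrime P X j))) ^ d := by
    rw [hC, mul_pow, div_pow, mul_div_assoc]
  have hC0 : 0 ≤ C := by
    rw [hC']
    have := rhoPrime_nonneg (P := P) X j
    exact pow_nonneg (mul_nonneg j.cast_nonneg (div_nonneg (by linarith) (by linarith))) d
  have hσle (i : ℕ) : σdiag i ≤ C * ∫ ω, ⟪X 0 ω, e i⟫ ^ 2 ∂P :=
    le_of_tendsto (hσ i) <| Eventually.of_forall fun L =>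
      div_le_of_le_mul₀ (by positivity) (by positivity) <|
        (integral_inner_boxSum_sq_le hmeas hstat hmoment hmean (e i) hj hρ L).trans_eq
          (by rw [hC']; ring)
  have hσ0 : 0 ≤ σdiag := fun i =>
    ge_of_tendsto (hσ i) (Eventually.of_forall fun L => by positivity)
  have hsum (s : Finset ℕ) : ∑ i ∈ s, σdiag i ≤ C * ∫ ω, ‖X 0 ω‖ ^ 2 ∂P :=
    (sum_le_sum fun i _ => hσle i).trans <| by
      rw [← mul_sum]
      exact mul_le_mul_of_nonneg_left (he.sum_integral_inner_sq_le hmoment s) hC0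
  exact ⟨hσle, summable_of_sum_le hσ0 hsum, Real.tsum_le_of_sum_le hσ0 hsum⟩

open scoped RealInnerProductSpace in
/-- Finite trace of the covariance operator: with `j` such that `ρ'(X,j) < 1`
and `C = j^d (1+ρ'(X,j))^d / (1-ρ'(X,j))^d`, one has
`σ_{ii} ≤ C E⟪X₀, e_i⟫²` for every `i`, hence
`∑_i σ_{ii} ≤ C E‖X₀‖² < ∞`. -/
theorem covariance_operator_finite_trace
    {Ω : Type*} [MeasurableSpace Ω] (P : Measure Ω) [IsProbabilityMeasure P]
    {H : Type*} [NormedAddCommGroup H] [InnerProductSpace ℝ H] [CompleteSpace H]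
    [TopologicalSpace.SeparableSpace H] [MeasurableSpace H] [BorelSpace H]
    (e : ℕ → H) (he : Orthonormal ℝ e)
    (htotal : ⊤ ≤ (Submodule.span ℝ (Set.range e)).topologicalClosure)
    (d : ℕ) (hd : 0 < d) (X : (Fin d → ℤ) → Ω → H)
    (hmeas : ∀ k, Measurable (X k))
    (hstat : StrictlyStationary P X)
    (hmix : RhoPrimeMixing P X)
    (hmoment : MemLp (X 0) 2 P)
    (hmean : ∫ ω, X 0 ω ∂P = 0)
    (j : ℕ) (hj : 0 < j) (hρ : rhoPrime P X j < 1)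
    (C : ℝ)
    (hC : C = (j : ℝ) ^ d * (1 + rhoPrime P X j) ^ d / (1 - rhoPrime P X j) ^ d)
    (σdiag : ℕ → ℝ)
    (hσ : ∀ i, Tendsto (fun L : Fin d → ℕ =>
        (∫ ω, ⟪boxSum X L ω, e i⟫ ^ 2 ∂P) / ∏ u, (L u : ℝ))
        atTop (nhds (σdiag i))) :
    (∀ i, σdiag i ≤ C * ∫ ω, ⟪X 0 ω, e i⟫ ^ 2 ∂P) ∧
      Summable σdiag ∧
      ∑' i, σdiag i ≤ C * ∫ ω, ‖X 0 ω‖ ^ 2 ∂P :=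
  covariance_operator_finite_trace_general P e he d X hmeas hstat hmoment hmean j hj hρ C hC σdiag
    hσ
end
end

section
/- Let d be a positive integer and let (S, dist) be a complete separable metric space with Borel σ-field 𝒮. Let (μ(k), k ∈ N^d) be an array of probability measures on (S, 𝒮) and let ν be a probability measure on (S, 𝒮). Suppose that for every u ∈ {1,...,d} and every sequence (L^{(n)}, n ∈ N) of elements of N^d such that L^{(n)}_u = n for all n ≥ 1 and L^{(n)}_v → ∞ as n → ∞ for every v ∈ {1,...,d}\{u}, the measures μ(L^{(n)}) converge weakly to ν. Then μ(L) converges weakly to ν as min{L_1,...,L_d} → ∞; i.e., for every sequence (L^{(n)}) in N^d with min_u L^{(n)}_u → ∞, μ(L^{(n)}) ⇒ ν. -/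
/-!
Since `ℕ^d` is countably generated at `∞`, it suffices that every sequence `L n` in `ℕ^d` with all
coordinates tending to `∞` has a subsequence along which `μ (L n) ⇒ ν`. Fix a coordinate `u` and
pass to a subsequence on which the `u`-th coordinate is strictly increasing, taking the values
`g 0 < g 1 < ⋯`. This subsequence is the restriction to the times `g k` of a sequence `M` with
`M n u = n` (fill the gaps `g k < n < g (k + 1)` with the `k`-th term, its `u`-th coordinate reset
to `n`), whose other coordinates still tend to `∞`; the hypothesis applies to `M`.
-/

open Filter MeasureTheory

def lastIndexLE (g : ℕ → ℕ) (n : ℕ) : ℕ :=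
  Nat.findGreatest (fun k => g k ≤ n) n

section lastIndexLE

variable {g : ℕ → ℕ}

theorem StrictMono.lastIndexLE_apply (hg : StrictMono g) (k : ℕ) :
    lastIndexLE g (g k) = k := by
  have hk : k ≤ lastIndexLE g (g k) := Nat.le_findGreatest (hg.id_le k) le_rfl
  have hspec : g (lastIndexLE g (g k)) ≤ g k :=
    Nat.findGreatest_spec (P := fun j => g j ≤ g k) (hg.id_le k) le_rfl
  exact le_antisymm (hg.le_iff_le.mp hspec) hk

theorem StrictMono.tendsto_lastIndexLE (hg : StrictMono g) :
    Tendsto (lastIndexLE g) atTop atTop :=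
  tendsto_atTop_atTop.mpr fun K =>
    ⟨g K, fun _ hn => Nat.le_findGreatest ((hg.id_le K).trans hn) hn⟩

end lastIndexLE

theorem tendsto_apply_of_tendsto_atTop_pi {α ι β : Type*} [Preorder β] {l : Filter α}
    {x : α → ι → β} (hx : Tendsto x l atTop) (i : ι) : Tendsto (fun a => x a i) l atTop :=
  (tendsto_atTop_atTop_of_monotone (Function.monotone_eval i)
    fun b => ⟨fun _ => b, le_rfl⟩).comp hx

theorem exists_extension_apply_eq_self {ι : Type*} [DecidableEq ι] {x : ℕ → ι → ℕ} {u : ι}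
    (hx : ∀ v, Tendsto (fun n => x n v) atTop atTop) (hu : StrictMono fun n => x n u) :
    ∃ M : ℕ → ι → ℕ, (∀ n, M n u = n) ∧ (∀ v, Tendsto (fun n => M n v) atTop atTop) ∧
      ∀ k, M (x k u) = x k := by
  refine ⟨fun n => Function.update (x (lastIndexLE (fun k => x k u) n)) u n,
    fun n => by simp, fun v => ?_, fun k => by simp [hu.lastIndexLE_apply]⟩
  rcases eq_or_ne v u with rfl | hvu
  · simp only [Function.update_self]
    exact tendsto_id
  · simpa [hvu, Function.comp_def] using (hx v).comp hu.tendsto_lastIndexLE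

theorem weak_convergence_of_sequential_weak_convergence_general
    {S : Type*} [MetricSpace S] [MeasurableSpace S]
    (d : ℕ) (hd : 0 < d)
    (μ : (Fin d → ℕ) → Measure S) (ν : Measure S)
    (h : ∀ u : Fin d, ∀ L : ℕ → (Fin d → ℕ),
      (∀ n : ℕ, L n u = n) →
      (∀ v : Fin d, v ≠ u → Tendsto (fun n => L n v) atTop atTop) →
      ∀ f : BoundedContinuousFunction S ℝ,
        Tendsto (fun n => ∫ x, f x ∂(μ (L n))) atTop (nhds (∫ x, f x ∂ν))) :
    ∀ f : BoundedContinuousFunction S ℝ,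
      Tendsto (fun L : Fin d → ℕ => ∫ x, f x ∂(μ L)) atTop
        (nhds (∫ x, f x ∂ν)) := by
  intro f
  refine tendsto_of_subseq_tendsto fun L hL => ?_
  let u : Fin d := ⟨0, hd⟩
  obtain ⟨φ, hφ, hLu⟩ :=
    strictMono_subseq_of_tendsto_atTop (tendsto_apply_of_tendsto_atTop_pi hL u)
  obtain ⟨M, hMu, hM, hML⟩ : ∃ M : ℕ → Fin d → ℕ, _ ∧ _ ∧ ∀ k, M (L (φ k) u) = L (φ k) :=
    exists_extension_apply_eq_self
      (fun v => (tendsto_apply_of_tendsto_atTop_pi hL v).comp hφ.tendsto_atTop) hLu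
  refine ⟨φ, ?_⟩
  have hMφ := (h u M hMu (fun v _ => hM v) f).comp hLu.tendsto_atTop
  simpa [Function.comp_def, hML] using hMφ

/-- Proposition (II): if along every sequence `(L^{(n)})` in `ℕ^d` with
`L^{(n)}_u = n` and all other coordinates tending to `∞` the probability
measures `μ(L^{(n)})` converge weakly to `ν`, then `μ(L) ⇒ ν` as
`min{L₁,…,L_d} → ∞` (weak convergence being tested against bounded
continuous real functions). -/
theorem weak_convergence_of_sequential_weak_convergence
    {S : Type*} [MetricSpace S] [CompleteSpace S]
    [TopologicalSpace.SeparableSpace S] [MeasurableSpace S] [BorelSpace S]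
    (d : ℕ) (hd : 0 < d)
    (μ : (Fin d → ℕ) → Measure S) (ν : Measure S)
    (hμ : ∀ k, IsProbabilityMeasure (μ k)) (hν : IsProbabilityMeasure ν)
    (h : ∀ u : Fin d, ∀ L : ℕ → (Fin d → ℕ),
      (∀ n : ℕ, L n u = n) →
      (∀ v : Fin d, v ≠ u → Tendsto (fun n => L n v) atTop atTop) →
      ∀ f : BoundedContinuousFunction S ℝ,
        Tendsto (fun n => ∫ x, f x ∂(μ (L n))) atTop (nhds (∫ x, f x ∂ν))) :
    ∀ f : BoundedContinuousFunction S ℝ,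
      Tendsto (fun L : Fin d → ℕ => ∫ x, f x ∂(μ L)) atTop
        (nhds (∫ x, f x ∂ν)) :=
  weak_convergence_of_sequential_weak_convergence_general d hd μ ν h
end
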